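/- Let A ∨ B →h C → D be a homotopy cofibration of simply connected pointed CW-complexes. If the restriction of h to the wedge summand A is null homotopic, then the suspension ΣA is a homotopy retract of D; that is, there exist maps ΣA → D and D → ΣA whose composite ΣA → D → ΣA is homotopic to the identity. -/

import Mathlib

open CategoryTheory AlgebraicTopology unitInterval

noncomputable section

/-! ## Pointed topological spaces -/

/-- A pointed topological space. -/
structure PSp : Type 1 where
  carrier : Type
  [tp : TopologicalSpace carrier]
  pt : carrier

attribute [instance] PSp.tp

instance : CoeSort PSp Type := ⟨PSp.carrier⟩

/-- A pointed continuous map. -/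
@[ext] structure PMap (A B : PSp) where
  toFun : A → B
  cont : Continuous toFun
  map_pt : toFun A.pt = B.pt

/-- The underlying continuous map of a pointed map. -/
def PMap.toC {A B : PSp} (f : PMap A B) : C(A, B) := ⟨f.toFun, f.cont⟩

def PMap.id (A : PSp) : PMap A A := ⟨fun a => a, continuous_id, rfl⟩

def PMap.comp {A B C : PSp} (g : PMap B C) (f : PMap A B) : PMap A C :=
  ⟨g.toFun ∘ f.toFun, g.cont.comp f.cont, by simp [f.map_pt, g.map_pt]⟩

/-- The constant pointed map. -/
def PMap.const (A B : PSp) : PMap A B := ⟨fun _ => B.pt, continuous_const, rfl⟩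

/-- Pointed (based) homotopy: homotopy relative to the basepoint. -/
def PHomotopic {A B : PSp} (f g : PMap A B) : Prop :=
  ContinuousMap.HomotopicRel f.toC g.toC {A.pt}

theorem PHomotopic.refl {A B : PSp} (f : PMap A B) : PHomotopic f f :=
  ContinuousMap.HomotopicRel.refl _

/-- A pointed map is a pointed homotopy equivalence. -/
def IsPHEquiv {A B : PSp} (f : PMap A B) : Prop :=
  ∃ g : PMap B A, PHomotopic (g.comp f) (PMap.id A) ∧ PHomotopic (f.comp g) (PMap.id B)

theorem isPHEquiv_id {A : PSp} : IsPHEquiv (PMap.id A) :=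
  ⟨PMap.id A, PHomotopic.refl _, PHomotopic.refl _⟩

/-- Two pointed spaces are (pointed) homotopy equivalent. -/
def PHEquiv (A B : PSp) : Prop := ∃ f : PMap A B, IsPHEquiv f

/-- `f` admits a right homotopy inverse. -/
def HasRightHtpyInv {A B : PSp} (f : PMap A B) : Prop :=
  ∃ s : PMap B A, PHomotopic (f.comp s) (PMap.id B)

/-- `f` admits a left homotopy inverse. -/
def HasLeftHtpyInv {A B : PSp} (f : PMap A B) : Prop :=
  ∃ k : PMap B A, PHomotopic (k.comp f) (PMap.id A)

/-- The one-point pointed space. -/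
def PSpPt : PSp := ⟨PUnit, PUnit.unit⟩

/-- The product of pointed spaces. -/
def PSp.prod (A B : PSp) : PSp := ⟨A × B, (A.pt, B.pt)⟩

/-! ## Loop spaces -/

/-- The underlying type of the based loop space. -/
abbrev LoopsType (A : PSp) : Type := {γ : C(unitInterval, A.carrier) // γ 0 = A.pt ∧ γ 1 = A.pt}

/-- The based loop space `Ω A`. -/
def Loops (A : PSp) : PSp :=
  ⟨LoopsType A, ⟨ContinuousMap.const _ A.pt, rfl, rfl⟩⟩

/-- Functoriality of the based loop space. -/
def Loops.map {A B : PSp} (f : PMap A B) : PMap (Loops A) (Loops B) where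
  toFun := fun γ => show LoopsType B from
    ⟨f.toC.comp γ.1, by
      constructor
      · show f.toFun (γ.1 0) = B.pt
        rw [γ.2.1, f.map_pt]
      · show f.toFun (γ.1 1) = B.pt
        rw [γ.2.2, f.map_pt]⟩
  cont := by
    apply Continuous.subtype_mk
    exact (ContinuousMap.continuous_postcomp f.toC).comp continuous_subtype_val
  map_pt := by
    apply Subtype.ext
    ext t
    show f.toFun A.pt = B.pt
    exact f.map_pt

/-! ## Wedge sums -/

/-- The defining relation for the wedge sum. -/
inductive wedgeRel (A B : PSp) : (A.carrier ⊕ B.carrier) → (A.carrier ⊕ B.carrier) → Prop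
  | glue : wedgeRel A B (Sum.inl A.pt) (Sum.inr B.pt)

/-- The wedge sum `A ∨ B` of pointed spaces. -/
def Wedge (A B : PSp) : PSp := ⟨Quot (wedgeRel A B), Quot.mk _ (Sum.inl A.pt)⟩

/-- Inclusion of the first wedge summand. -/
def Wedge.inl (A B : PSp) : PMap A (Wedge A B) :=
  ⟨fun a => Quot.mk _ (Sum.inl a), continuous_quot_mk.comp continuous_inl, rfl⟩

/-- Inclusion of the second wedge summand. -/
def Wedge.inr (A B : PSp) : PMap B (Wedge A B) :=
  ⟨fun b => Quot.mk _ (Sum.inr b), continuous_quot_mk.comp continuous_inr,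
    (Quot.sound (wedgeRel.glue)).symm⟩

/-- The pinch map `A ∨ B → A` onto the first wedge summand. -/
def Wedge.p1 (A B : PSp) : PMap (Wedge A B) A where
  toFun := Quot.lift (Sum.elim _root_.id fun _ => A.pt)
    (by rintro _ _ ⟨⟩; rfl)
  cont := continuous_quot_lift _ (continuous_id.sumElim continuous_const)
  map_pt := rfl

/-- The pinch map `A ∨ B → B` onto the second wedge summand. -/
def Wedge.p2 (A B : PSp) : PMap (Wedge A B) B where
  toFun := Quot.lift (Sum.elim (fun _ => B.pt) _root_.id)
    (by rintro _ _ ⟨⟩; rfl)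
  cont := continuous_quot_lift _ (continuous_const.sumElim continuous_id)
  map_pt := rfl

/-- The wedge of two pointed maps, `f ∨ g`. -/
def Wedge.map {A B X Y : PSp} (f : PMap A X) (g : PMap B Y) :
    PMap (Wedge A B) (Wedge X Y) where
  toFun := Quot.lift (fun s => Quot.mk _ (Sum.map f.toFun g.toFun s))
    (by rintro _ _ ⟨⟩
        show Quot.mk _ (Sum.inl (f.toFun A.pt)) = Quot.mk _ (Sum.inr (g.toFun B.pt))
        rw [f.map_pt, g.map_pt]
        exact Quot.sound wedgeRel.glue)
  cont := continuous_quot_lift _ (continuous_quot_mk.comp (f.cont.sumMap g.cont))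
  map_pt := by
    show Quot.mk _ (Sum.inl (f.toFun A.pt)) = Quot.mk _ (Sum.inl X.pt)
    rw [f.map_pt]

/-! ## Reduced suspension -/

/-- The defining relation for the reduced suspension. -/
inductive suspRel (A : PSp) : (unitInterval × A.carrier) → (unitInterval × A.carrier) → Prop
  | zero (a a' : A.carrier) : suspRel A (0, a) (0, a')
  | one (a a' : A.carrier) : suspRel A (1, a) (1, a')
  | base (t t' : unitInterval) : suspRel A (t, A.pt) (t', A.pt)

/-- The reduced suspension `Σ A`. -/
def Susp (A : PSp) : PSp := ⟨Quot (suspRel A), Quot.mk _ (0, A.pt)⟩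

/-- Functoriality of the reduced suspension. -/
def Susp.map {A B : PSp} (f : PMap A B) : PMap (Susp A) (Susp B) where
  toFun := Quot.lift (fun p => Quot.mk _ (p.1, f.toFun p.2))
    (by rintro _ _ (⟨a, a'⟩ | ⟨a, a'⟩ | ⟨t, t'⟩)
        · exact Quot.sound (suspRel.zero _ _)
        · exact Quot.sound (suspRel.one _ _)
        · show Quot.mk _ (t, f.toFun A.pt) = Quot.mk _ (t', f.toFun A.pt)
          rw [f.map_pt]; exact Quot.sound (suspRel.base t t'))
  cont := continuous_quot_lift _ (continuous_quot_mk.comp (continuous_fst.prodMk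
    (f.cont.comp continuous_snd)))
  map_pt := by
    show Quot.mk _ ((0 : unitInterval), f.toFun A.pt) = Quot.mk _ ((0 : unitInterval), B.pt)
    rw [f.map_pt]

namespace SuspComul

variable (A : PSp)

/-- Auxiliary function for the suspension comultiplication. -/
def aux (p : unitInterval × A.carrier) : (Wedge (Susp A) (Susp A)).carrier :=
  if (p.1 : ℝ) ≤ 1 / 2 then
    (Wedge.inl (Susp A) (Susp A)).toFun
      (Quot.mk _ (Set.projIcc (0 : ℝ) 1 zero_le_one (2 * (p.1 : ℝ)), p.2))
  else
    (Wedge.inr (Susp A) (Susp A)).toFun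
      (Quot.mk _ (Set.projIcc (0 : ℝ) 1 zero_le_one (2 * (p.1 : ℝ) - 1), p.2))

theorem aux_continuous : Continuous (aux A) := by
  apply Continuous.if_le
  · exact (Wedge.inl (Susp A) (Susp A)).cont.comp <| continuous_quot_mk.comp <|
      ((continuous_projIcc.comp ((continuous_const.mul continuous_subtype_val).comp
        continuous_fst)).prodMk continuous_snd)
  · exact (Wedge.inr (Susp A) (Susp A)).cont.comp <| continuous_quot_mk.comp <|
      ((continuous_projIcc.comp (((continuous_const.mul continuous_subtype_val).sub
        continuous_const).comp continuous_fst)).prodMk continuous_snd)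
  · exact continuous_subtype_val.comp continuous_fst
  · exact continuous_const
  · intro p hp
    have h2 : 2 * (p.1 : ℝ) = 1 := by rw [hp]; norm_num
    rw [h2, show (1 : ℝ) - 1 = 0 by norm_num]
    have e1 : Set.projIcc (0 : ℝ) 1 zero_le_one 1 = (1 : unitInterval) := by
      simp [Set.projIcc]
    have e0 : Set.projIcc (0 : ℝ) 1 zero_le_one 0 = (0 : unitInterval) := by
      simp [Set.projIcc]
    rw [e1, e0]
    have l1 : Quot.mk (suspRel A) (1, p.2) = Quot.mk _ ((0 : unitInterval), A.pt) := by
      exact (Quot.sound (suspRel.one p.2 A.pt)).trans (Quot.sound (suspRel.base 1 0))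
    have l2 : Quot.mk (suspRel A) (0, p.2) = Quot.mk _ ((0 : unitInterval), A.pt) :=
      Quot.sound (suspRel.zero p.2 A.pt)
    show (Wedge.inl (Susp A) (Susp A)).toFun (Quot.mk _ ((1 : unitInterval), p.2))
      = (Wedge.inr (Susp A) (Susp A)).toFun (Quot.mk _ ((0 : unitInterval), p.2))
    rw [show (Quot.mk _ ((1:unitInterval), p.2) : (Susp A).carrier) = (Susp A).pt from l1,
        show (Quot.mk _ ((0:unitInterval), p.2) : (Susp A).carrier) = (Susp A).pt from l2]
    rw [(Wedge.inl (Susp A) (Susp A)).map_pt, (Wedge.inr (Susp A) (Susp A)).map_pt]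

theorem aux_respects : ∀ p q, suspRel A p q → aux A p = aux A q := by
  rintro _ _ (⟨a, a'⟩ | ⟨a, a'⟩ | ⟨t, t'⟩)
  · show aux A (0, a) = aux A (0, a')
    have h0 : ((0 : unitInterval) : ℝ) ≤ 1 / 2 := by norm_num
    simp only [aux, if_pos h0]
    congr 1
    have : (2 : ℝ) * ((0 : unitInterval) : ℝ) = 0 := by norm_num
    rw [this]
    have e0 : Set.projIcc (0 : ℝ) 1 zero_le_one 0 = (0 : unitInterval) := by
      simp [Set.projIcc]
    rw [e0]
    exact Quot.sound (suspRel.zero a a')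
  · show aux A (1, a) = aux A (1, a')
    have h1 : ¬ ((1 : unitInterval) : ℝ) ≤ 1 / 2 := by norm_num
    simp only [aux, if_neg h1]
    congr 1
    have : (2 : ℝ) * ((1 : unitInterval) : ℝ) - 1 = 1 := by norm_num
    rw [this]
    have e1 : Set.projIcc (0 : ℝ) 1 zero_le_one 1 = (1 : unitInterval) := by
      simp [Set.projIcc]
    rw [e1]
    exact Quot.sound (suspRel.one a a')
  · show aux A (t, A.pt) = aux A (t', A.pt)
    have base_eq : ∀ s : unitInterval, aux A (s, A.pt) = (Wedge (Susp A) (Susp A)).pt := by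
      intro s
      by_cases hs : (s : ℝ) ≤ 1 / 2
      · simp only [aux, if_pos hs]
        rw [show (Quot.mk _ (Set.projIcc (0:ℝ) 1 zero_le_one (2 * (s:ℝ)), A.pt) :
              (Susp A).carrier) = (Susp A).pt from Quot.sound (suspRel.base _ _)]
        exact (Wedge.inl (Susp A) (Susp A)).map_pt
      · simp only [aux, if_neg hs]
        rw [show (Quot.mk _ (Set.projIcc (0:ℝ) 1 zero_le_one (2 * (s:ℝ) - 1), A.pt) :
              (Susp A).carrier) = (Susp A).pt from Quot.sound (suspRel.base _ _)]
        exact (Wedge.inr (Susp A) (Susp A)).map_pt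
    rw [base_eq t, base_eq t']

end SuspComul

/-- The suspension comultiplication `σ : Σ A → Σ A ∨ Σ A`. -/
def suspComul (A : PSp) : PMap (Susp A) (Wedge (Susp A) (Susp A)) where
  toFun := Quot.lift (SuspComul.aux A) (SuspComul.aux_respects A)
  cont := continuous_quot_lift _ (SuspComul.aux_continuous A)
  map_pt := by
    show SuspComul.aux A (0, A.pt) = (Wedge (Susp A) (Susp A)).pt
    have h0 : ((0 : unitInterval) : ℝ) ≤ 1 / 2 := by norm_num
    simp only [SuspComul.aux, if_pos h0]
    rw [show (Quot.mk _ (Set.projIcc (0:ℝ) 1 zero_le_one (2 * ((0 : unitInterval):ℝ)), A.pt) :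
          (Susp A).carrier) = (Susp A).pt from Quot.sound (suspRel.base _ _)]
    exact (Wedge.inl (Susp A) (Susp A)).map_pt

/-- The sum `f + g : Σ A → B ∨ D` of two maps defined on a suspension, namely the
composite of the suspension comultiplication with `f ∨ g`. -/
def PMap.wsum {A B D : PSp} (f : PMap (Susp A) B) (g : PMap (Susp A) D) :
    PMap (Susp A) (Wedge B D) :=
  (Wedge.map f g).comp (suspComul A)

/-! ## Mapping cones and homotopy cofibrations -/

/-- The defining relation for the reduced mapping cone of `f : A → B`. -/
inductive coneRel {A B : PSp} (f : PMap A B) :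
    ((unitInterval × A.carrier) ⊕ B.carrier) → ((unitInterval × A.carrier) ⊕ B.carrier) → Prop
  | zero (a a' : A.carrier) : coneRel f (Sum.inl (0, a)) (Sum.inl (0, a'))
  | base (t t' : unitInterval) : coneRel f (Sum.inl (t, A.pt)) (Sum.inl (t', A.pt))
  | glue (a : A.carrier) : coneRel f (Sum.inl (1, a)) (Sum.inr (f.toFun a))

/-- The reduced mapping cone (homotopy cofibre) of `f`. -/
def Cone {A B : PSp} (f : PMap A B) : PSp := ⟨Quot (coneRel f), Quot.mk _ (Sum.inr B.pt)⟩

/-- The canonical inclusion of `B` into the mapping cone of `f : A → B`. -/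
def Cone.incl {A B : PSp} (f : PMap A B) : PMap B (Cone f) :=
  ⟨fun b => Quot.mk _ (Sum.inr b), continuous_quot_mk.comp continuous_inr, rfl⟩

/-- `A →f B →j C` is a homotopy cofibration: `C` is identified with the mapping
cone of `f` by a pointed homotopy equivalence compatible with `j`. -/
def IsHomotopyCofib {A B C : PSp} (f : PMap A B) (j : PMap B C) : Prop :=
  ∃ e : PMap (Cone f) C, IsPHEquiv e ∧ PHomotopic (e.comp (Cone.incl f)) j

theorem isHomotopyCofib_cone {A B : PSp} (f : PMap A B) :
    IsHomotopyCofib f (Cone.incl f) :=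
  ⟨PMap.id _, isPHEquiv_id, PHomotopic.refl _⟩

/-! ## The left half-smash -/

/-- The defining relation for the left half-smash `A ⋉ B`. -/
inductive lsmashRel (A B : PSp) : (A.carrier × B.carrier) → (A.carrier × B.carrier) → Prop
  | collapse (a a' : A.carrier) : lsmashRel A B (a, B.pt) (a', B.pt)

/-- The left half-smash `A ⋉ B = (A × B) / (A × pt)`. -/
def LSmash (A B : PSp) : PSp := ⟨Quot (lsmashRel A B), Quot.mk _ (A.pt, B.pt)⟩

/-! ## Homotopy fibres and homotopy fibrations -/

/-- The underlying type of the homotopy fibre of `f : B → Z`. -/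
abbrev HFibType {B Z : PSp} (f : PMap B Z) : Type :=
  {p : B.carrier × C(unitInterval, Z.carrier) // f.toFun p.1 = p.2 0 ∧ p.2 1 = Z.pt}

/-- The homotopy fibre of a pointed map `f : B → Z`. -/
def HFib {B Z : PSp} (f : PMap B Z) : PSp :=
  ⟨HFibType f, ⟨(B.pt, ContinuousMap.const _ Z.pt), by simp [f.map_pt], rfl⟩⟩

/-- The canonical map from the homotopy fibre of `f` to its total space. -/
def HFib.incl {B Z : PSp} (f : PMap B Z) : PMap (HFib f) B where
  toFun := fun p => p.1.1
  cont := continuous_fst.comp continuous_subtype_val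
  map_pt := rfl

/-- The map of homotopy fibres induced by `u : B → B'` over `Z`, for a strictly
commuting triangle `h' ∘ u = h`. -/
def HFib.comap {B B' Z : PSp} (u : PMap B B') (h' : PMap B' Z) :
    PMap (HFib (h'.comp u)) (HFib h') where
  toFun := fun p => show HFibType h' from
    ⟨(u.toFun p.1.1, p.1.2), p.2.1, p.2.2⟩
  cont := by
    apply Continuous.subtype_mk
    exact ((u.cont.comp continuous_fst).prodMk continuous_snd).comp continuous_subtype_val
  map_pt := by
    apply Subtype.ext
    show (u.toFun B.pt, ContinuousMap.const _ Z.pt) = (B'.pt, ContinuousMap.const _ Z.pt)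
    rw [u.map_pt]

/-! ## Double mapping cylinders and homotopy pushouts -/

/-- The defining relation for the (reduced) double mapping cylinder of
`X ←p W →q C`. -/
inductive dcylRel {W X C : PSp} (p : PMap W X) (q : PMap W C) :
    (X.carrier ⊕ ((unitInterval × W.carrier) ⊕ C.carrier)) →
      (X.carrier ⊕ ((unitInterval × W.carrier) ⊕ C.carrier)) → Prop
  | left (w : W.carrier) : dcylRel p q (Sum.inl (p.toFun w)) (Sum.inr (Sum.inl (0, w)))
  | right (w : W.carrier) : dcylRel p q (Sum.inr (Sum.inl (1, w))) (Sum.inr (Sum.inr (q.toFun w)))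
  | base (t t' : unitInterval) :
      dcylRel p q (Sum.inr (Sum.inl (t, W.pt))) (Sum.inr (Sum.inl (t', W.pt)))

/-- The (reduced) double mapping cylinder of `X ←p W →q C`, a model for the
homotopy pushout. -/
def DCyl {W X C : PSp} (p : PMap W X) (q : PMap W C) : PSp :=
  ⟨Quot (dcylRel p q), Quot.mk _ (Sum.inl X.pt)⟩

/-- The canonical map `X → DCyl p q`. -/
def DCyl.inl {W X C : PSp} (p : PMap W X) (q : PMap W C) : PMap X (DCyl p q) :=
  ⟨fun x => Quot.mk _ (Sum.inl x), continuous_quot_mk.comp continuous_inl, rfl⟩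

/-- The canonical map `C → DCyl p q`. -/
def DCyl.inr {W X C : PSp} (p : PMap W X) (q : PMap W C) : PMap C (DCyl p q) where
  toFun := fun c => Quot.mk _ (Sum.inr (Sum.inr c))
  cont := continuous_quot_mk.comp (continuous_inr.comp continuous_inr)
  map_pt := by
    show Quot.mk _ (Sum.inr (Sum.inr C.pt)) = Quot.mk _ (Sum.inl X.pt)
    have h1 : Quot.mk (dcylRel p q) (Sum.inr (Sum.inr C.pt))
        = Quot.mk _ (Sum.inr (Sum.inl ((1 : unitInterval), W.pt))) := by
      conv_lhs => rw [← q.map_pt]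
      exact (Quot.sound (dcylRel.right W.pt)).symm
    have h2 : Quot.mk (dcylRel p q) (Sum.inr (Sum.inl ((1 : unitInterval), W.pt)))
        = Quot.mk _ (Sum.inr (Sum.inl ((0 : unitInterval), W.pt))) :=
      Quot.sound (dcylRel.base 1 0)
    have h3 : Quot.mk (dcylRel p q) (Sum.inr (Sum.inl ((0 : unitInterval), W.pt)))
        = Quot.mk _ (Sum.inl X.pt) := by
      conv_rhs => rw [← p.map_pt]
      exact (Quot.sound (dcylRel.left W.pt)).symm
    exact (h1.trans h2).trans h3

/-- `M`, together with `j : X → M` and `φ : C → M`, is a homotopy pushout of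
`X ←p W →q C`: it is identified with the double mapping cylinder by a pointed
homotopy equivalence compatible with the two canonical maps. -/
def IsHomotopyPushout {W X C M : PSp} (p : PMap W X) (q : PMap W C)
    (j : PMap X M) (φ : PMap C M) : Prop :=
  ∃ e : PMap (DCyl p q) M, IsPHEquiv e ∧
    PHomotopic (e.comp (DCyl.inl p q)) j ∧ PHomotopic (e.comp (DCyl.inr p q)) φ

/-! ## Spheres and finite wedges -/

/-- The `n`-sphere as a pointed space, modelled as an iterated reduced suspension
of `S⁰`. -/
def Sph : ℕ → PSp
  | 0 => ⟨Bool, true⟩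
  | (n + 1) => Susp (Sph n)

/-- The `k`-fold wedge power `⋁_{i=1}^k A`. -/
def wedgePow (A : PSp) : ℕ → PSp
  | 0 => PSpPt
  | (k + 1) => Wedge A (wedgePow A k)

/-- The inclusion of the `i`-th wedge summand into `⋁_{i=1}^k A`. -/
def wedgeIncl (A : PSp) : ∀ (k : ℕ), Fin k → PMap A (wedgePow A k)
  | 0, i => i.elim0
  | (k + 1), ⟨0, _⟩ => Wedge.inl A (wedgePow A k)
  | (k + 1), ⟨i + 1, h⟩ =>
      (Wedge.inr A (wedgePow A k)).comp (wedgeIncl A k ⟨i, Nat.lt_of_succ_lt_succ h⟩)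

/-! ## CW-complexes -/

universe u

namespace RelativeCWComplex

/-- The `n`-sphere, in `ℝ^(n+1)` (empty for `n = -1`). -/
def sphere (n : ℤ) : TopCat.{u} :=
  TopCat.of <| ULift <| Metric.sphere (0 : EuclideanSpace ℝ <| Fin <| Int.toNat <| n + 1) 1

/-- The `n`-disk, in `ℝ^n`. -/
def disk (n : ℤ) : TopCat.{u} :=
  TopCat.of <| ULift <| Metric.closedBall (0 : EuclideanSpace ℝ <| Fin <| Int.toNat n) 1

/-- The inclusion of the `n`-sphere into the `(n + 1)`-disk. -/
def sphereInclusion (n : ℤ) : sphere.{u} n ⟶ disk.{u} (n + 1) :=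
  TopCat.ofHom ⟨fun p => ULift.up ⟨p.down.1, Metric.sphere_subset_closedBall p.down.2⟩,
    by first
      | fun_prop
      | exact continuous_uliftUp.comp ((continuous_subtype_val.comp continuous_uliftDown).subtype_mk _)⟩

/-- The coproduct of sphere inclusions. -/
def sigmaSphereInclusion (n : ℤ) (cells : Type u) :
    Limits.sigmaObj (fun _ : cells => sphere.{u} n) ⟶
      Limits.sigmaObj (fun _ : cells => disk.{u} (n + 1)) :=
  Limits.Sigma.map fun _ => sphereInclusion n

/-- The map out of the coproduct of spheres given by attaching maps. -/
def sigmaAttachMap (X : TopCat.{u}) (n : ℤ) (cells : Type u)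
    (attachMaps : cells → (sphere.{u} n ⟶ X)) :
    Limits.sigmaObj (fun _ : cells => sphere.{u} n) ⟶ X :=
  Limits.Sigma.desc attachMaps

/-- `X'` is obtained from `X` by attaching `(n + 1)`-disks. -/
structure AttachCells (X X' : TopCat.{u}) (n : ℤ) where
  cells : Type u
  attachMaps : cells → (sphere.{u} n ⟶ X)
  iso_pushout : X' ≅ Limits.pushout (sigmaSphereInclusion n cells)
    (sigmaAttachMap X n cells attachMaps)

end RelativeCWComplex

/-- A relative CW-complex (December 2024 Mathlib definition). -/
structure RelativeCWComplex where
  sk : ℕ → TopCat.{u}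
  attachCells (n : ℕ) : RelativeCWComplex.AttachCells (sk n) (sk (n + 1)) (n - 1)

/-- A CW-complex: a relative CW-complex with empty `(-1)`-skeleton. -/
structure CWComplex extends RelativeCWComplex.{u} where
  isEmpty_sk_zero : IsEmpty (sk 0)

namespace RelativeCWComplex

/-- The inclusion `X ⟶ X'` when `X'` is obtained from `X` by attaching cells. -/
def AttachCells.inclusion {X X' : TopCat.{u}} {n : ℤ} (att : AttachCells X X' n) : X ⟶ X' :=
  Limits.pushout.inr _ _ ≫ att.iso_pushout.inv

/-- The inclusion of skeleta. -/
def skInclusion (X : RelativeCWComplex.{u}) (n : ℕ) : X.sk n ⟶ X.sk (n + 1) :=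
  (X.attachCells n).inclusion

/-- The realization of a relative CW-complex, the colimit of its skeleta. -/
def toTopCat (X : RelativeCWComplex.{u}) : TopCat.{u} :=
  Limits.colimit (Functor.ofSequence X.skInclusion)

end RelativeCWComplex

/-- A pointed space has the homeomorphism type of a CW-complex. -/
def IsCWSpace (A : PSp) : Prop :=
  ∃ K : CWComplex.{0}, Nonempty (K.toRelativeCWComplex.toTopCat ≃ₜ A.carrier)

/-- A CW-complex is finite if it has finitely many cells, all in a bounded range
of dimensions. -/
def CWComplex.IsFiniteCW (K : CWComplex.{0}) : Prop :=
  (∀ m : ℕ, Finite ((K.attachCells m).cells)) ∧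
    ∃ N : ℕ, ∀ m : ℕ, N ≤ m → IsEmpty ((K.attachCells m).cells)

/-- A pointed space has the homeomorphism type of a finite CW-complex. -/
def IsFiniteCWSpace (A : PSp) : Prop :=
  ∃ K : CWComplex.{0}, K.IsFiniteCW ∧ Nonempty (K.toRelativeCWComplex.toTopCat ≃ₜ A.carrier)

/-! ## Singular homology and cohomology -/

open scoped Topology

/-- The singular chain complex functor, defined via the free simplicial
`ℤ`-module on the singular simplicial set. -/
def singularChains : TopCat.{0} ⥤ ChainComplex (ModuleCat.{0} ℤ) ℕ :=
  TopCat.toSSet ⋙ ((SimplicialObject.whiskering _ _).obj (ModuleCat.free ℤ)) ⋙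
    alternatingFaceMapComplex _

/-- The `n`-th singular homology functor with integer coefficients. -/
def SHfun (n : ℕ) : TopCat.{0} ⥤ ModuleCat.{0} ℤ :=
  singularChains ⋙ HomologicalComplex.homologyFunctor _ _ n

/-- The `n`-th singular homology group `H_n(A; ℤ)` of a pointed space. -/
def SH (n : ℕ) (A : PSp) : Type := (SHfun n).obj (TopCat.of A.carrier)

instance (n : ℕ) (A : PSp) : AddCommGroup (SH n A) := by unfold SH; infer_instance
instance (n : ℕ) (A : PSp) : Module ℤ (SH n A) := by unfold SH; infer_instance

/-- The contravariant `ℤ`-linear duality functor `M ↦ Hom_ℤ(M, ℤ)`. -/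
def dualFunctor : (ModuleCat.{0} ℤ)ᵒᵖ ⥤ ModuleCat.{0} ℤ :=
  (linearYoneda ℤ (ModuleCat.{0} ℤ)).obj (ModuleCat.of ℤ ℤ)

instance : dualFunctor.Additive := by unfold dualFunctor; infer_instance

/-- The singular cochain complex functor (the `ℤ`-linear dual of the singular
chain complex). -/
def singularCochains :
    TopCat.{0}ᵒᵖ ⥤ HomologicalComplex (ModuleCat.{0} ℤ) (ComplexShape.down ℕ).symm :=
  singularChains.op ⋙ HomologicalComplex.opFunctor _ _ ⋙ dualFunctor.mapHomologicalComplex _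

/-- The `n`-th singular cohomology functor with integer coefficients. -/
def SCohfun (n : ℕ) : TopCat.{0}ᵒᵖ ⥤ ModuleCat.{0} ℤ :=
  singularCochains ⋙ HomologicalComplex.homologyFunctor _ _ n

/-- The `n`-th singular cohomology group `H^n(A; ℤ)` of a pointed space. -/
def SCoh (n : ℕ) (A : PSp) : Type := (SCohfun n).obj (Opposite.op (TopCat.of A.carrier))

instance (n : ℕ) (A : PSp) : AddCommGroup (SCoh n A) := by unfold SCoh; infer_instance
instance (n : ℕ) (A : PSp) : Module ℤ (SCoh n A) := by unfold SCoh; infer_instance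

/-- The morphism of `TopCat` underlying a pointed map. -/
def PMap.toTop {A B : PSp} (f : PMap A B) : TopCat.of A.carrier ⟶ TopCat.of B.carrier :=
  TopCat.ofHom f.toC

/-- The map induced on singular cohomology by a pointed map. -/
def SCohMap (n : ℕ) {A B : PSp} (f : PMap A B) : SCoh n B → SCoh n A :=
  fun z => ((SCohfun n).map (Opposite.op f.toTop)) z

/-! ## Connectivity and rational homotopy -/

/-- A pointed space is `k`-connected if its homotopy groups vanish in degrees
`≤ k`. -/
def KConn (k : ℕ) (A : PSp) : Prop :=
  ∀ i : ℕ, i ≤ k → Subsingleton (HomotopyGroup (Fin i) A.carrier A.pt)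

/-- The rationalized `(n+2)`-nd homotopy group `π_{n+2}(A) ⊗ ℚ`. -/
def ratPi (A : PSp) (n : ℕ) : Type :=
  TensorProduct ℤ ℚ (Additive (HomotopyGroup (Fin (n + 2)) A.carrier A.pt))

instance (A : PSp) (n : ℕ) : AddCommGroup (ratPi A n) := by unfold ratPi; infer_instance
instance (A : PSp) (n : ℕ) : Module ℚ (ratPi A n) := by unfold ratPi; infer_instance

/-- A simply connected pointed space is rationally elliptic if
`dim (π_*(A) ⊗ ℚ) < ∞`. -/
def RatElliptic (A : PSp) : Prop :=
  (∀ n : ℕ, Module.Finite ℚ (ratPi A n)) ∧ {n : ℕ | Nontrivial (ratPi A n)}.Finite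

/-- A simply connected pointed space is rationally hyperbolic if it is not
rationally elliptic. -/
def RatHyperbolic (A : PSp) : Prop := ¬ RatElliptic A

/-! ## Complexes with a single top cell, and connected sums -/

/-- A pointed space presented as an `n`-dimensional complex with a single top
cell: a codimension-one skeleton `skel`, together with an attaching map
`attach : S^{n-1} → skel` (the `(n-1)`-sphere being written as `Σ S^{n-2}`)
whose homotopy cofibre is the given space. -/
structure CellTop (n : ℕ) extends PSp where
  skel : PSp
  attach : PMap (Susp (Sph (n - 2))) skel
  incl : PMap skel toPSp
  cofib : IsHomotopyCofib attach incl

/-- The connected sum of two `n`-dimensional complexes with single top cells: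
the homotopy cofibre of the sum `f_M + f_N : S^{n-1} → skel_M ∨ skel_N` of the
two attaching maps. -/
def ConnSum {n : ℕ} (M N : CellTop n) : CellTop n where
  toPSp := Cone (PMap.wsum M.attach N.attach)
  skel := Wedge M.skel N.skel
  attach := PMap.wsum M.attach N.attach
  incl := Cone.incl _
  cofib := isHomotopyCofib_cone _

/-- The iterated connected sum of a nonempty collection
`M :: L` of `n`-dimensional complexes with single top cells. -/
def connSumAll {n : ℕ} : CellTop n → List (CellTop n) → CellTop n
  | M, [] => M
  | M, (N :: L) => ConnSum M (connSumAll N L)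

/-! ## Poincaré duality complexes -/

/-- A Poincaré duality complex of dimension `n`: a finite, simply connected
pointed CW-complex, presented with a single top cell attached to its
codimension-one skeleton, whose integral cohomology satisfies Poincaré duality:
it carries a cup product, a fundamental cohomology class generating
`H^n ≅ ℤ`, cohomology vanishes above dimension `n`, and cohomology in degree
`k` is isomorphic to homology in degree `n - k`. -/
structure PDComplex (n : ℕ) extends CellTop n where
  simplyConn : SimplyConnectedSpace carrier
  finiteCW : IsFiniteCWSpace toPSp
  cup : ∀ i j : ℕ, SCoh i toPSp →ₗ[ℤ] SCoh j toPSp →ₗ[ℤ] SCoh (i + j) toPSp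
  fund : SCoh n toPSp
  fund_gen : ∀ z : SCoh n toPSp, ∃! m : ℤ, z = m • fund
  vanish : ∀ k : ℕ, n < k → Subsingleton (SCoh k toPSp)
  duality : ∀ k : ℕ, k ≤ n → Nonempty (SCoh k toPSp ≃ₗ[ℤ] SH (n - k) toPSp)

/-- Compatibility of the pinch map with `j ∨ 1`. -/
theorem p1_comp_wedgeMap {X Y M : PSp} (j : PMap X M) :
    (Wedge.p1 M Y).comp (Wedge.map j (PMap.id Y)) = j.comp (Wedge.p1 X Y) := by
  apply PMap.ext
  funext w
  induction w using Quot.ind with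
  | _ s =>
    cases s with
    | inl x =>
      show (Wedge.p1 M Y).toFun ((Wedge.map j (PMap.id Y)).toFun (Quot.mk _ (Sum.inl x)))
        = j.toFun ((Wedge.p1 X Y).toFun (Quot.mk _ (Sum.inl x)))
      have h1 : (Wedge.map j (PMap.id Y)).toFun (Quot.mk _ (Sum.inl x))
          = Quot.mk _ (Sum.inl (j.toFun x)) := rfl
      rw [h1]
      rfl
    | inr y =>
      show (Wedge.p1 M Y).toFun ((Wedge.map j (PMap.id Y)).toFun (Quot.mk _ (Sum.inr y)))
        = j.toFun ((Wedge.p1 X Y).toFun (Quot.mk _ (Sum.inr y)))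
      have h1 : (Wedge.map j (PMap.id Y)).toFun (Quot.mk _ (Sum.inr y))
          = Quot.mk _ (Sum.inr y) := rfl
      rw [h1]
      show M.pt = j.toFun X.pt
      exact j.map_pt.symm

/-- Transport of homotopy fibres along an equality of maps. -/
def HFib.cast {B Z : PSp} {h h' : PMap B Z} (e : h = h') : PMap (HFib h) (HFib h') :=
  e ▸ PMap.id (HFib h)

end

/-!
A null homotopy `F` of `h ∘ inl : A → C` extends the cone on `inl : A → A ∨ B` to a map
`Σ A → C_h` into the mapping cone: run up the cone on `[0, 1/2]`, then along `F` into `C` on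
`[1/2, 1]`. Collapsing `C` and pinching `A ∨ B` onto `A` gives `C_h → Σ A`, and the composite
`Σ A → Σ A` merely reparametrises the suspension coordinate by `t ↦ min (2t) 1`, so it is
homotopic to the identity. Finally `D ≃ C_h` transports the retraction to `D`.
-/

@[fun_prop]
theorem PMap.continuous_toFun {A B : PSp} (f : PMap A B) : Continuous f.toFun := f.cont

theorem PHomotopic.comp_left {A B C : PSp} {f g : PMap A B} (H : PHomotopic f g)
    (k : PMap B C) : PHomotopic (k.comp f) (k.comp g) :=
  H.comp_continuousMap k.toC

theorem PHomotopic.comp_right {A B C : PSp} {f g : PMap B C} (H : PHomotopic f g)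
    (u : PMap A B) : PHomotopic (f.comp u) (g.comp u) := by
  obtain ⟨F⟩ := H
  refine ⟨⟨F.toHomotopy.comp (ContinuousMap.Homotopy.refl u.toC), ?_⟩⟩
  rintro t _ rfl
  show F (t, u.toFun A.pt) = f.toFun (u.toFun A.pt)
  rw [u.map_pt]
  exact F.eq_fst t rfl

theorem HasLeftHtpyInv.comp_isPHEquiv {X Y Z : PSp} {s : PMap X Y} (hs : HasLeftHtpyInv s)
    {e : PMap Y Z} (he : IsPHEquiv e) : HasLeftHtpyInv (e.comp s) := by
  obtain ⟨r, hrs⟩ := hs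
  obtain ⟨g, hge, -⟩ := he
  exact ⟨r.comp g, (hge.comp_right s |>.comp_left r).trans hrs⟩

theorem Wedge.p1_comp_inl (A B : PSp) : (Wedge.p1 A B).comp (Wedge.inl A B) = PMap.id A := rfl

noncomputable section

namespace Susp

theorem map_id (A : PSp) : Susp.map (PMap.id A) = PMap.id (Susp A) := by
  ext x
  induction x using Quot.ind
  rfl

theorem map_comp {A B C : PSp} (g : PMap B C) (f : PMap A B) :
    Susp.map (g.comp f) = (Susp.map g).comp (Susp.map f) := by
  ext x
  induction x using Quot.ind
  rfl

variable {A : PSp} (φ : C(I, I))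

def reparam (h₀ : φ 0 = 0) (h₁ : φ 1 = 1) : PMap (Susp A) (Susp A) where
  toFun := Quot.lift (fun p => Quot.mk _ (φ p.1, p.2)) (by
    rintro _ _ (⟨a, a'⟩ | ⟨a, a'⟩ | ⟨t, t'⟩)
    · simp only [h₀]; exact Quot.sound (suspRel.zero a a')
    · simp only [h₁]; exact Quot.sound (suspRel.one a a')
    · exact Quot.sound (suspRel.base _ _))
  cont := continuous_quot_lift _ <| continuous_quot_mk.comp <|
    (φ.continuous.comp continuous_fst).prodMk continuous_snd
  map_pt := by
    show Quot.mk _ (φ 0, A.pt) = Quot.mk _ (0, A.pt)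
    rw [h₀]

def reparamHomotopyAux : C((I × A) × I, Susp A) :=
  ⟨fun p => Quot.mk _
    (Set.projIcc 0 1 zero_le_one ((1 - (p.2 : ℝ)) * φ p.1.1 + p.2 * p.1.1), p.1.2), by fun_prop⟩

theorem reparamHomotopyAux_curry_respects (h₀ : φ 0 = 0) (h₁ : φ 1 = 1) :
    ∀ p q, suspRel A p q → (reparamHomotopyAux φ).curry p = (reparamHomotopyAux φ).curry q := by
  rintro _ _ (⟨a, a'⟩ | ⟨a, a'⟩ | ⟨t, t'⟩) <;> ext s
  · show Quot.mk _ (Set.projIcc 0 1 zero_le_one ((1 - (s : ℝ)) * (φ 0 : ℝ) + s * (0 : I)), a) =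
      Quot.mk _ (Set.projIcc 0 1 zero_le_one ((1 - (s : ℝ)) * (φ 0 : ℝ) + s * (0 : I)), a')
    rw [h₀, Set.Icc.coe_zero, mul_zero, mul_zero, add_zero, Set.projIcc_left]
    exact Quot.sound (suspRel.zero a a')
  · show Quot.mk _ (Set.projIcc 0 1 zero_le_one ((1 - (s : ℝ)) * (φ 1 : ℝ) + s * (1 : I)), a) =
      Quot.mk _ (Set.projIcc 0 1 zero_le_one ((1 - (s : ℝ)) * (φ 1 : ℝ) + s * (1 : I)), a')
    rw [h₁, Set.Icc.coe_one, mul_one, mul_one, sub_add_cancel, Set.projIcc_right]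
    exact Quot.sound (suspRel.one a a')
  · exact Quot.sound (suspRel.base _ _)

/- `I × Σ A` need not carry the quotient topology of `I × (I × A)`, so the homotopy is descended
in curried form and uncurried using local compactness of `I`. -/
def reparamHomotopy (h₀ : φ 0 = 0) (h₁ : φ 1 = 1) : C(I × Susp A, Susp A) :=
  (ContinuousMap.uncurry
    ⟨Quot.lift (reparamHomotopyAux φ).curry (reparamHomotopyAux_curry_respects φ h₀ h₁),
      continuous_quot_lift _ (reparamHomotopyAux φ).curry.continuous⟩).comp
    ContinuousMap.prodSwap

theorem reparam_phomotopic_id (h₀ : φ 0 = 0) (h₁ : φ 1 = 1) : PHomotopic (reparam φ h₀ h₁) (PMap.id (Susp A)) := by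
  refine ⟨⟨⟨reparamHomotopy φ h₀ h₁, ?_, ?_⟩, ?_⟩⟩
  · rintro ⟨t, a⟩
    show Quot.mk _ (Set.projIcc 0 1 zero_le_one ((1 - ((0 : I) : ℝ)) * φ t + (0 : I) * t), a) =
      Quot.mk _ (φ t, a)
    rw [Set.Icc.coe_zero, sub_zero, one_mul, zero_mul, add_zero, Set.projIcc_val]
  · rintro ⟨t, a⟩
    show Quot.mk _ (Set.projIcc 0 1 zero_le_one ((1 - ((1 : I) : ℝ)) * φ t + (1 : I) * t), a) =
      Quot.mk _ (t, a)
    rw [Set.Icc.coe_one, sub_self, zero_mul, one_mul, zero_add, Set.projIcc_val]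
  · rintro s _ rfl
    exact Quot.sound (suspRel.base _ _)

end Susp

namespace Cone

def toSusp {W Y : PSp} (f : PMap W Y) : PMap (Cone f) (Susp W) where
  toFun := Quot.lift (Sum.elim (Quot.mk _) fun _ => (Susp W).pt) (by
    rintro _ _ (⟨w, w'⟩ | ⟨t, t'⟩ | ⟨w⟩)
    · exact Quot.sound (suspRel.zero w w')
    · exact Quot.sound (suspRel.base t t')
    · exact (Quot.sound (suspRel.one w W.pt)).trans (Quot.sound (suspRel.base 1 0)))
  cont := continuous_quot_lift _ (continuous_quot_mk.sumElim continuous_const)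
  map_pt := rfl

variable {X W Y : PSp} (f : PMap W Y) (i : PMap X W)
  (F : ContinuousMap.HomotopyRel (f.comp i).toC (PMap.const X Y).toC {X.pt})

def liftAux (p : I × X) : Cone f :=
  if (p.1 : ℝ) ≤ 1 / 2 then
    Quot.mk _ (Sum.inl (Set.projIcc 0 1 zero_le_one (2 * (p.1 : ℝ)), i.toFun p.2))
  else
    Quot.mk _ (Sum.inr (F (Set.projIcc 0 1 zero_le_one (2 * (p.1 : ℝ) - 1), p.2)))

theorem continuous_liftAux : Continuous (liftAux f i F) := by
  refine Continuous.if_le (by fun_prop) (by fun_prop) (by fun_prop) continuous_const ?_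
  intro p hp
  rw [hp, show 2 * (1 / 2 : ℝ) = 1 by norm_num, sub_self, Set.projIcc_right, Set.projIcc_left]
  show (Quot.mk _ (Sum.inl ((1 : I), i.toFun p.2)) : Cone f) = Quot.mk _ (Sum.inr (F (0, p.2)))
  rw [F.apply_zero]
  exact Quot.sound (coneRel.glue _)

theorem liftAux_of_le {t : I} (ht : (t : ℝ) ≤ 1 / 2) (x : X) :
    liftAux f i F (t, x) =
      Quot.mk _ (Sum.inl (Set.projIcc 0 1 zero_le_one (2 * (t : ℝ)), i.toFun x)) :=
  if_pos ht

theorem liftAux_of_lt {t : I} (ht : 1 / 2 < (t : ℝ)) (x : X) :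
    liftAux f i F (t, x) =
      Quot.mk _ (Sum.inr (F (Set.projIcc 0 1 zero_le_one (2 * (t : ℝ) - 1), x))) :=
  if_neg ht.not_ge

theorem liftAux_base (t : I) : liftAux f i F (t, X.pt) = (Cone f).pt := by
  rcases le_or_gt (t : ℝ) (1 / 2) with ht | ht
  · rw [liftAux_of_le f i F ht, i.map_pt]
    exact (Quot.sound (coneRel.base _ 1)).trans
      ((Quot.sound (coneRel.glue W.pt)).trans (congrArg _ (congrArg Sum.inr f.map_pt)))
  · rw [liftAux_of_lt f i F ht, F.eq_fst _ rfl]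
    show (Quot.mk _ (Sum.inr (f.toFun (i.toFun X.pt))) : Cone f) = Quot.mk _ (Sum.inr Y.pt)
    rw [i.map_pt, f.map_pt]

theorem liftAux_respects : ∀ p q, suspRel X p q → liftAux f i F p = liftAux f i F q := by
  rintro _ _ (⟨a, a'⟩ | ⟨a, a'⟩ | ⟨t, t'⟩)
  · have h0 : ((0 : I) : ℝ) ≤ 1 / 2 := by norm_num
    rw [liftAux_of_le f i F h0, liftAux_of_le f i F h0, Set.Icc.coe_zero, mul_zero,
      Set.projIcc_left]
    exact Quot.sound (coneRel.zero _ _)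
  · have h1 : 1 / 2 < ((1 : I) : ℝ) := by norm_num
    rw [liftAux_of_lt f i F h1, liftAux_of_lt f i F h1, Set.Icc.coe_one,
      show (2 * 1 - 1 : ℝ) = 1 by norm_num, Set.projIcc_right]
    show (Quot.mk _ (Sum.inr (F (1, a))) : Cone f) = Quot.mk _ (Sum.inr (F (1, a')))
    rw [F.apply_one, F.apply_one]
    rfl
  · rw [liftAux_base, liftAux_base]

def lift : PMap (Susp X) (Cone f) where
  toFun := Quot.lift (liftAux f i F) (liftAux_respects f i F)
  cont := continuous_quot_lift _ (continuous_liftAux f i F)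
  map_pt := liftAux_base f i F 0

def doubleClamp : C(I, I) := ⟨fun t => Set.projIcc 0 1 zero_le_one (2 * (t : ℝ)), by fun_prop⟩

theorem doubleClamp_zero : doubleClamp 0 = 0 := by
  simp [doubleClamp]

theorem doubleClamp_one : doubleClamp 1 = 1 := by
  simp [doubleClamp]

theorem toSusp_comp_lift :
    (toSusp f).comp (lift f i F) =
      (Susp.map i).comp (Susp.reparam doubleClamp doubleClamp_zero doubleClamp_one) := by
  ext x
  induction x using Quot.ind with
  | _ p =>
    obtain ⟨t, x⟩ := p
    show (toSusp f).toFun (liftAux f i F (t, x)) = Quot.mk _ (doubleClamp t, i.toFun x)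
    rcases le_or_gt (t : ℝ) (1 / 2) with ht | ht
    · rw [liftAux_of_le f i F ht]
      rfl
    · rw [liftAux_of_lt f i F ht]
      show (Susp W).pt = Quot.mk _ (Set.projIcc 0 1 zero_le_one (2 * (t : ℝ)), i.toFun x)
      rw [Set.projIcc_of_right_le _ (by linarith)]
      exact ((Quot.sound (suspRel.one _ W.pt)).trans (Quot.sound (suspRel.base 1 0))).symm

theorem hasLeftHtpyInv_lift {r : PMap W X} (hri : r.comp i = PMap.id X) :
    HasLeftHtpyInv (lift f i F) := by
  refine ⟨(Susp.map r).comp (toSusp f), ?_⟩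
  have hcomp : ((Susp.map r).comp (toSusp f)).comp (lift f i F) =
      Susp.reparam doubleClamp doubleClamp_zero doubleClamp_one :=
    calc ((Susp.map r).comp (toSusp f)).comp (lift f i F)
        _ = (Susp.map r).comp ((toSusp f).comp (lift f i F)) := rfl
        _ = (Susp.map (r.comp i)).comp (Susp.reparam _ _ _) := by
          rw [toSusp_comp_lift, Susp.map_comp]; rfl
        _ = Susp.reparam _ _ _ := by rw [hri, Susp.map_id]; rfl
  rw [hcomp]
  exact Susp.reparam_phomotopic_id _ _ _

end Cone

end

theorem suspension_retract_of_null_restriction_general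
    (A B C D : PSp)
    (h : PMap (Wedge A B) C) (jD : PMap C D)
    (hcofib : IsHomotopyCofib h jD)
    (hnull : PHomotopic (h.comp (Wedge.inl A B)) (PMap.const A C)) :
    ∃ (s : PMap (Susp A) D) (rmap : PMap D (Susp A)),
      PHomotopic (rmap.comp s) (PMap.id (Susp A)) := by
  obtain ⟨F⟩ := hnull
  obtain ⟨e, he, -⟩ := hcofib
  exact ⟨_, (Cone.hasLeftHtpyInv_lift h _ F (Wedge.p1_comp_inl A B)).comp_isPHEquiv he⟩

/-- Let `A ∨ B →h C → D` be a homotopy cofibration of simply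
connected pointed CW-complexes. If the restriction of `h` to the wedge summand `A`
is null homotopic, then the suspension `ΣA` is a homotopy retract of `D`: there are
maps `ΣA → D` and `D → ΣA` whose composite is homotopic to the identity. -/
theorem suspension_retract_of_null_restriction
    (A B C D : PSp)
    (hA : IsCWSpace A) (hB : IsCWSpace B) (hC : IsCWSpace C) (hD : IsCWSpace D)
    (hAs : SimplyConnectedSpace A.carrier) (hBs : SimplyConnectedSpace B.carrier)
    (hCs : SimplyConnectedSpace C.carrier) (hDs : SimplyConnectedSpace D.carrier)
    (h : PMap (Wedge A B) C) (jD : PMap C D)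
    (hcofib : IsHomotopyCofib h jD)
    (hnull : PHomotopic (h.comp (Wedge.inl A B)) (PMap.const A C)) :
    ∃ (s : PMap (Susp A) D) (rmap : PMap D (Susp A)),
      PHomotopic (rmap.comp s) (PMap.id (Susp A)) :=
  suspension_retract_of_null_restriction_general A B C D h jD hcofib hnull
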